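/- Let α ∈ (0,1) and for each integer k ≥ 2 set φ₁(k) = π(k−1)/(2(k−α)) and a^{(k)} = 2^{α−1} k^α cos(φ₁(k))^α / cos(α φ₁(k)). Then the sequence (a^{(k)})_{k≥2} is strictly increasing in k, and a^{(k)} → ((1−α)π)^α sin(απ/2)/sin(απ) as k → ∞. -/

import Mathlib

open Real

/-- The first coordinate `a^{(k)} = 2^{α−1} k^α cos(φ₁(k))^α / cos(α φ₁(k))`, with
`φ₁(k) = π(k−1)/(2(k−α))`, of the vertex of the numerical stability region of the
Grünwald–Letnikov scheme with step size `h = 1/k`. -/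
noncomputable def aVertex (α : ℝ) (k : ℕ) : ℝ :=
  2 ^ (α - 1) * (k:ℝ) ^ α *
    Real.cos (Real.pi * ((k:ℝ) - 1) / (2 * ((k:ℝ) - α))) ^ α /
    Real.cos (α * (Real.pi * ((k:ℝ) - 1) / (2 * ((k:ℝ) - α))))

open Set Filter Topology

/-! With `ψ = π/2 − φ₁(k) = π(1−α)/(2(k−α))`, which decreases to `0`, one has
`π/2 − αφ₁(k) = (1−α)π/2 + αψ = kψ`, so `a^{(k)} = 2^{α−1} (s · sin ψ / ψ)^α / sin s` with
`s = (1−α)π/2 + αψ`. The logarithmic derivative of this in `ψ` is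
`α (α/s − cot s − (1/ψ − cot ψ))`, which is negative: `1/x − cot x` is convex on `(0, π/2]` (its
second derivative has the sign of `sin³ x − x³ cos x`) and equals `2/π < 1/s` at `π/2`, so
evaluating the convexity inequality at `s = αψ + (1−α)π/2` gives the claim. The limit is the value
of the expression at `ψ = 0`, where `sin ψ / ψ` is continued by `sinc`. -/

namespace Real

lemma mul_cos_le_sin {x : ℝ} (hx₀ : 0 ≤ x) (hx : x ≤ π / 2) : x * cos x ≤ sin x := by
  rcases hx.lt_or_eq with hx | rfl
  · have hcos : 0 < cos x := cos_pos_of_mem_Ioo ⟨by linarith [pi_pos], hx⟩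
    have := le_tan hx₀ hx
    rwa [tan_eq_sin_div_cos, le_div_iff₀ hcos] at this
  · simp

lemma pow_three_mul_cos_le_sin_pow_three {x : ℝ} (hx₀ : 0 ≤ x) (hx : x ≤ π / 2) :
    x ^ 3 * cos x ≤ sin x ^ 3 := by
  let f : ℝ → ℝ := fun y ↦ sin y ^ 3 - y ^ 3 * cos y
  have hf (y : ℝ) : HasDerivAt f (3 * cos y * (sin y ^ 2 - y ^ 2) + y ^ 3 * sin y) y := by
    refine (((hasDerivAt_sin y).pow 3).sub
      ((hasDerivAt_pow 3 y).mul (hasDerivAt_cos y))).congr_deriv ?_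
    push_cast
    ring
  have hf_nonneg : ∀ y ∈ interior (Icc 0 (π / 2)), 0 ≤ deriv f y := by
    intro y hy
    rw [interior_Icc] at hy
    obtain ⟨hy₀, hy⟩ := hy
    rw [(hf y).deriv]
    have hcos : 0 ≤ cos y := cos_nonneg_of_mem_Icc ⟨by linarith [pi_pos], hy.le⟩
    have hsin : 0 ≤ sin y := sin_nonneg_of_nonneg_of_le_pi hy₀.le (by linarith [pi_pos])
    -- `y² − sin² y = (y − sin y)(y + sin y) ≤ (y³/6)(2y)`, and `y⁴ cos y ≤ y³ sin y`
    have hsq : y ^ 2 - sin y ^ 2 ≤ y ^ 4 / 3 := by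
      nlinarith [mul_le_mul (sub_le_comm.mp (sin_ge_sub_cube hy₀.le))
        (add_le_add_left (sin_le hy₀.le) y) (by positivity) (by positivity)]
    nlinarith [mul_le_mul_of_nonneg_left hsq hcos,
      mul_le_mul_of_nonneg_left (mul_cos_le_sin hy₀.le hy.le) (pow_nonneg hy₀.le 3)]
  have hmono := monotoneOn_of_deriv_nonneg (convex_Icc 0 (π / 2))
    (fun y _ ↦ (hf y).continuousAt.continuousWithinAt)
    (fun y _ ↦ (hf y).differentiableAt.differentiableWithinAt) hf_nonneg
  simpa [f] using hmono ⟨le_rfl, by positivity⟩ ⟨hx₀, hx⟩ hx₀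

end Real

noncomputable def invSubCot (x : ℝ) : ℝ := x⁻¹ - cot x

lemma hasDerivAt_invSubCot {x : ℝ} (hx : sin x ≠ 0) :
    HasDerivAt invSubCot ((sin x ^ 2)⁻¹ - (x ^ 2)⁻¹) x := by
  have hx₀ : x ≠ 0 := by rintro rfl; simp at hx
  have hcot : HasDerivAt (fun y ↦ cos y / sin y) (-(sin x ^ 2)⁻¹) x := by
    refine ((hasDerivAt_cos x).div (hasDerivAt_sin x) hx).congr_deriv ?_
    field_simp
    linear_combination -sin_sq_add_cos_sq x
  have := (hasDerivAt_inv hx₀).sub hcot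
  simp only [← cot_eq_cos_div_sin] at this
  exact this.congr_deriv (by ring)

lemma hasDerivAt_inv_sin_sq_sub_inv_sq {x : ℝ} (hx : sin x ≠ 0) :
    HasDerivAt (fun y ↦ (sin y ^ 2)⁻¹ - (y ^ 2)⁻¹)
      (2 / x ^ 3 - 2 * cos x / sin x ^ 3) x := by
  have hx₀ : x ≠ 0 := by rintro rfl; simp at hx
  refine ((((hasDerivAt_sin x).pow 2).inv (pow_ne_zero 2 hx)).sub
    ((hasDerivAt_pow 2 x).inv (pow_ne_zero 2 hx₀))).congr_deriv ?_
  simp only [Pi.pow_apply]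
  field_simp
  ring

lemma convexOn_invSubCot : ConvexOn ℝ (Ioc 0 (π / 2)) invSubCot := by
  have hsin : ∀ x ∈ Ioc 0 (π / 2), sin x ≠ 0 := fun x hx ↦
    (sin_pos_of_pos_of_lt_pi hx.1 (by linarith [hx.2, pi_pos])).ne'
  refine convexOn_of_hasDerivWithinAt2_nonneg (convex_Ioc 0 (π / 2))
    (fun x hx ↦ (hasDerivAt_invSubCot (hsin x hx)).continuousAt.continuousWithinAt)
    (fun x hx ↦ (hasDerivAt_invSubCot (hsin x (interior_subset hx))).hasDerivWithinAt)
    (fun x hx ↦ (hasDerivAt_inv_sin_sq_sub_inv_sq (hsin x (interior_subset hx))).hasDerivWithinAt)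
    fun x hx ↦ ?_
  rw [interior_Ioc] at hx
  have hsin_pos : 0 < sin x := sin_pos_of_pos_of_lt_pi hx.1 (by linarith [hx.2, pi_pos])
  have := pow_three_mul_cos_le_sin_pow_three hx.1.le hx.2.le
  rw [sub_nonneg, div_le_div_iff₀ (pow_pos hsin_pos 3) (pow_pos hx.1 3)]
  nlinarith

lemma invSubCot_nonneg {x : ℝ} (hx₀ : 0 < x) (hx : x ≤ π / 2) : 0 ≤ invSubCot x := by
  have hsin : 0 < sin x := sin_pos_of_pos_of_lt_pi hx₀ (by linarith [pi_pos])
  rw [invSubCot, cot_eq_cos_div_sin, sub_nonneg, div_le_iff₀ hsin, ← div_eq_inv_mul,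
    le_div_iff₀ hx₀, mul_comm]
  exact mul_cos_le_sin hx₀.le hx

lemma invSubCot_pi_div_two : invSubCot (π / 2) = 2 / π := by
  simp [invSubCot, cot_eq_cos_div_sin]

lemma one_sub_mul_pi_div_two_add_mul_mem_Ioo {α ψ : ℝ} (hα : α ∈ Ioo 0 1)
    (hψ : ψ ∈ Ico 0 (π / 2)) : (1 - α) * π / 2 + α * ψ ∈ Ioo 0 (π / 2) := by
  obtain ⟨hα₀, hα₁⟩ := hα
  have := pi_pos
  constructor <;> nlinarith [mul_nonneg hα₀.le hψ.1, mul_lt_mul_of_pos_left hψ.2 hα₀]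

lemma div_sub_cot_lt_invSubCot {α ψ : ℝ} (hα : α ∈ Ioo 0 1) (hψ : ψ ∈ Ioo 0 (π / 2)) :
    α / ((1 - α) * π / 2 + α * ψ) - cot ((1 - α) * π / 2 + α * ψ) < invSubCot ψ := by
  obtain ⟨hs₀, hs⟩ := one_sub_mul_pi_div_two_add_mul_mem_Ioo hα (Ioo_subset_Ico_self hψ)
  obtain ⟨hα₀, hα₁⟩ := hα
  obtain ⟨hψ₀, hψ⟩ := hψ
  set s := (1 - α) * π / 2 + α * ψ
  have hconv := convexOn_invSubCot.2 (⟨hψ₀, hψ.le⟩ : ψ ∈ Ioc 0 (π / 2))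
    (⟨by linarith [pi_pos], le_rfl⟩ : π / 2 ∈ Ioc 0 (π / 2)) hα₀.le (sub_nonneg.2 hα₁.le)
    (by ring)
  simp only [smul_eq_mul] at hconv
  rw [show α * ψ + (1 - α) * (π / 2) = s by ring, invSubCot_pi_div_two] at hconv
  have h2π : 2 / π < s⁻¹ := by
    rw [div_lt_iff₀ pi_pos, ← div_eq_inv_mul, lt_div_iff₀ hs₀]; linarith
  have hψ_nonneg := invSubCot_nonneg hψ₀ hψ.le
  have hs_split : α / s - cot s = invSubCot s - (1 - α) * s⁻¹ := by
    rw [invSubCot]; field_simp; ring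
  nlinarith [mul_lt_mul_of_pos_left h2π (sub_pos.2 hα₁)]

noncomputable def vertexGap (α t : ℝ) : ℝ := π * (1 - α) / (2 * (t - α))

noncomputable def vertexProfile (α ψ : ℝ) : ℝ :=
  (((1 - α) * π / 2 + α * ψ) * sinc ψ) ^ α / sin ((1 - α) * π / 2 + α * ψ)

section
variable {α : ℝ}

lemma vertexGap_mem_Ioo (hα : α < 1) {t : ℝ} (ht : 1 < t) : vertexGap α t ∈ Ioo 0 (π / 2) := by
  have := pi_pos
  have htα : 0 < t - α := by linarith
  refine ⟨by unfold vertexGap; have := sub_pos.2 hα; positivity, ?_⟩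
  rw [vertexGap, div_lt_div_iff₀ (by positivity) two_pos]
  nlinarith

lemma strictAntiOn_vertexGap (hα : α < 1) : StrictAntiOn (vertexGap α) (Ioi α) := by
  intro t ht u _ htu
  have := pi_pos
  have := sub_pos.2 hα
  have ht' : 0 < t - α := sub_pos.2 ht
  unfold vertexGap
  gcongr

lemma tendsto_vertexGap_atTop : Tendsto (vertexGap α) atTop (𝓝 0) :=
  ((tendsto_atTop_add_const_right _ (-α) tendsto_id).const_mul_atTop two_pos).const_div_atTop _

lemma aVertex_eq_vertexProfile (hα : α < 1) {k : ℕ} (hk : 1 < k) :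
    aVertex α k = 2 ^ (α - 1) * vertexProfile α (vertexGap α k) := by
  have hk' : (1 : ℝ) < k := by exact_mod_cast hk
  have hkα : (k : ℝ) - α ≠ 0 := by linarith
  obtain ⟨hψ₀, hψ⟩ := vertexGap_mem_Ioo hα hk'
  set ψ := vertexGap α k with hψ_def
  have hφ : π * ((k : ℝ) - 1) / (2 * ((k : ℝ) - α)) = π / 2 - ψ := by
    rw [hψ_def, vertexGap]; field_simp; ring
  have hαφ : α * (π / 2 - ψ) = π / 2 - ((1 - α) * π / 2 + α * ψ) := by ring
  have hkψ : (k : ℝ) * ψ = (1 - α) * π / 2 + α * ψ := by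
    rw [hψ_def, vertexGap]; field_simp; ring
  have hk_sin : (k : ℝ) * sin ψ = ((1 - α) * π / 2 + α * ψ) * sinc ψ := by
    rw [← hkψ, sinc_of_ne_zero hψ₀.ne']; field_simp
  rw [aVertex, vertexProfile, hφ, hαφ, cos_pi_div_two_sub, cos_pi_div_two_sub, ← hk_sin,
    mul_rpow (Nat.cast_nonneg k) (sin_nonneg_of_nonneg_of_le_pi hψ₀.le (by linarith))]
  ring

lemma vertexProfile_pos (hα : α ∈ Ioo 0 1) {ψ : ℝ} (hψ : ψ ∈ Ioo 0 (π / 2)) :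
    0 < vertexProfile α ψ := by
  obtain ⟨hs₀, hs⟩ := one_sub_mul_pi_div_two_add_mul_mem_Ioo hα (Ioo_subset_Ico_self hψ)
  have hsin : 0 < sin ψ := sin_pos_of_pos_of_lt_pi hψ.1 (by linarith [hψ.2, pi_pos])
  have hsin_s := sin_pos_of_pos_of_lt_pi hs₀ (by linarith [pi_pos])
  rw [vertexProfile, sinc_of_ne_zero hψ.1.ne']
  exact div_pos (rpow_pos_of_pos (mul_pos hs₀ (div_pos hsin hψ.1)) α) hsin_s

lemma log_vertexProfile (hα : α ∈ Ioo 0 1) {ψ : ℝ} (hψ : ψ ∈ Ioo 0 (π / 2)) :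
    log (vertexProfile α ψ) = α * (log ((1 - α) * π / 2 + α * ψ) + log (sin ψ) - log ψ)
      - log (sin ((1 - α) * π / 2 + α * ψ)) := by
  obtain ⟨hs₀, hs⟩ := one_sub_mul_pi_div_two_add_mul_mem_Ioo hα (Ioo_subset_Ico_self hψ)
  have hsin : 0 < sin ψ := sin_pos_of_pos_of_lt_pi hψ.1 (by linarith [hψ.2, pi_pos])
  have hsin_s := sin_pos_of_pos_of_lt_pi hs₀ (by linarith [pi_pos])
  have hbase := mul_pos hs₀ (div_pos hsin hψ.1)
  rw [vertexProfile, sinc_of_ne_zero hψ.1.ne', log_div (rpow_pos_of_pos hbase α).ne' hsin_s.ne',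
    log_rpow hbase, log_mul hs₀.ne' (div_pos hsin hψ.1).ne',
    log_div hsin.ne' hψ.1.ne']
  ring

lemma hasDerivAt_log_vertexProfile (hα : α ∈ Ioo 0 1) {ψ : ℝ} (hψ : ψ ∈ Ioo 0 (π / 2)) :
    HasDerivAt (fun ψ ↦ log (vertexProfile α ψ))
      (α * (α / ((1 - α) * π / 2 + α * ψ) - cot ((1 - α) * π / 2 + α * ψ) - invSubCot ψ)) ψ := by
  have hlin : HasDerivAt (fun ψ ↦ (1 - α) * π / 2 + α * ψ) α ψ := by
    simpa using ((hasDerivAt_id ψ).const_mul α).const_add ((1 - α) * π / 2)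
  obtain ⟨hs₀, hs⟩ := one_sub_mul_pi_div_two_add_mul_mem_Ioo hα (Ioo_subset_Ico_self hψ)
  have hsin : 0 < sin ψ := sin_pos_of_pos_of_lt_pi hψ.1 (by linarith [hψ.2, pi_pos])
  have hsin_s := sin_pos_of_pos_of_lt_pi hs₀ (by linarith [pi_pos])
  have hF := (((hlin.log hs₀.ne').add ((hasDerivAt_sin ψ).log hsin.ne')).sub
    (hasDerivAt_log hψ.1.ne')).const_mul α |>.sub (hlin.sin.log hsin_s.ne')
  refine (hF.congr_deriv ?_).congr_of_eventuallyEq ?_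
  · rw [invSubCot, cot_eq_cos_div_sin, cot_eq_cos_div_sin]
    ring
  · filter_upwards [isOpen_Ioo.mem_nhds hψ] with φ hφ using log_vertexProfile hα hφ

lemma strictAntiOn_vertexProfile (hα : α ∈ Ioo 0 1) :
    StrictAntiOn (vertexProfile α) (Ioo 0 (π / 2)) := by
  have hlog : StrictAntiOn (fun ψ ↦ log (vertexProfile α ψ)) (Ioo 0 (π / 2)) := by
    refine strictAntiOn_of_deriv_neg (convex_Ioo 0 (π / 2))
      (fun ψ hψ ↦ (hasDerivAt_log_vertexProfile hα hψ).continuousAt.continuousWithinAt)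
      fun ψ hψ ↦ ?_
    rw [interior_Ioo] at hψ
    rw [(hasDerivAt_log_vertexProfile hα hψ).deriv]
    exact mul_neg_of_pos_of_neg hα.1 (sub_neg.2 (div_sub_cot_lt_invSubCot hα hψ))
  intro x hx y hy hxy
  exact (log_lt_log_iff (vertexProfile_pos hα hy) (vertexProfile_pos hα hx)).1 (hlog hx hy hxy)

lemma continuousAt_vertexProfile_zero (hα : α ∈ Ioo 0 1) : ContinuousAt (vertexProfile α) 0 := by
  obtain ⟨hs₀, hs⟩ := one_sub_mul_pi_div_two_add_mul_mem_Ioo hα ⟨le_rfl, pi_div_two_pos⟩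
  have hsin := (sin_pos_of_pos_of_lt_pi hs₀ (by linarith [pi_pos])).ne'
  unfold vertexProfile
  exact (((continuous_const.add (continuous_const.mul continuous_id)).mul
    continuous_sinc).continuousAt.rpow_const (Or.inr hα.1.le)).div
    (continuous_sin.comp (continuous_const.add (continuous_const.mul continuous_id))).continuousAt
    hsin

lemma two_rpow_mul_vertexProfile_zero (hα : α ∈ Ioo 0 1) :
    2 ^ (α - 1) * vertexProfile α 0 = ((1 - α) * π) ^ α * sin (α * π / 2) / sin (α * π) := by
  obtain ⟨hα₀, hα₁⟩ := hα
  have hcos : 0 < cos (α * π / 2) :=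
    cos_pos_of_mem_Ioo ⟨by nlinarith [pi_pos], by nlinarith [pi_pos]⟩
  have hsin : 0 < sin (α * π / 2) :=
    sin_pos_of_pos_of_lt_pi (by have := pi_pos; positivity) (by nlinarith [pi_pos])
  have hsin_s : sin ((1 - α) * π / 2) = cos (α * π / 2) := by
    rw [← cos_pi_div_two_sub]; ring_nf
  have hsin_two : sin (α * π) = 2 * sin (α * π / 2) * cos (α * π / 2) := by
    rw [← sin_two_mul]; ring_nf
  have h2 : (2 : ℝ) ^ (α - 1) * ((1 - α) * π / 2) ^ α = ((1 - α) * π) ^ α / 2 := by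
    rw [div_rpow (by nlinarith [pi_pos]) zero_le_two, rpow_sub_one two_ne_zero]
    field_simp
  rw [vertexProfile, sinc_zero, mul_zero, add_zero, mul_one, hsin_s, hsin_two, ← mul_div_assoc, h2]
  field_simp

end

/-- For `α ∈ (0,1)`, the sequence `(a^{(k)})_{k ≥ 2}` is strictly increasing in `k`
and converges to `((1−α)π)^α sin(απ/2)/sin(απ)` as `k → ∞`. -/
theorem aVertex_strictMono_tendsto (α : ℝ) (hα : α ∈ Set.Ioo (0:ℝ) 1) :
    StrictMonoOn (aVertex α) (Set.Ici 2) ∧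
      Filter.Tendsto (fun k : ℕ => aVertex α k) Filter.atTop
        (nhds (((1 - α) * π) ^ α * Real.sin (α * π / 2) / Real.sin (α * π))) := by
  have hvertex (k : ℕ) (hk : 1 < k) := aVertex_eq_vertexProfile hα.2 hk
  refine ⟨fun k (hk : 2 ≤ k) l (hl : 2 ≤ l) hkl ↦ ?_, ?_⟩
  · have hk' : (1 : ℝ) < k := by exact_mod_cast hk
    have hl' : (1 : ℝ) < l := by exact_mod_cast hl
    rw [hvertex k (by omega), hvertex l (by omega)]
    refine mul_lt_mul_of_pos_left (strictAntiOn_vertexProfile hα (vertexGap_mem_Ioo hα.2 hl')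
      (vertexGap_mem_Ioo hα.2 hk') ?_) (by positivity)
    exact strictAntiOn_vertexGap hα.2 (hα.2.trans hk') (hα.2.trans hl') (by exact_mod_cast hkl)
  · have h := ((continuousAt_vertexProfile_zero hα).tendsto.comp
      ((tendsto_vertexGap_atTop (α := α)).comp tendsto_natCast_atTop_atTop)).const_mul (2 ^ (α - 1))
    rw [two_rpow_mul_vertexProfile_zero hα] at h
    refine h.congr' ?_
    filter_upwards [eventually_gt_atTop 1] with k hk using (hvertex k hk).symm
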